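/- Let 𝔸 = (A, ≤, →, Σ) be an implicative algebra with |A| < κ for a strongly inaccessible cardinal κ, and let W, ∈_W, =_W be as defined below. Then there exists j ∈ Σ such that j ≤ ⨅_{α∈W} ⨅_{u∈dom(α)} (α(u) → (u ∈_W α)). -/

import Mathlib

universe u

/-- An implicative algebra `𝔸 = (A, ≤, →, Σ)`:  a complete lattice `(A, ≤)` together with an
implication `imp` which is antitone in its first argument, monotone in its second argument and
turns infima in the second argument into infima, and a separator `Sig ⊆ A` which is upward
closed, closed under modus ponens and contains the combinators `K` and `S`. -/
structure ImplicativeAlgebra (A : Type u) [CompleteLattice A] where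
  imp : A → A → A
  imp_antitone : ∀ ⦃a a' b : A⦄, a ≤ a' → imp a' b ≤ imp a b
  imp_monotone : ∀ ⦃a b b' : A⦄, b ≤ b' → imp a b ≤ imp a b'
  imp_sInf : ∀ (a : A) (S : Set A), imp a (sInf S) = ⨅ b ∈ S, imp a b
  Sig : Set A
  Sig_upward : ∀ ⦃a b : A⦄, a ∈ Sig → a ≤ b → b ∈ Sig
  Sig_mp : ∀ ⦃a b : A⦄, imp a b ∈ Sig → a ∈ Sig → b ∈ Sig
  Sig_K : (⨅ a : A, ⨅ b : A, imp a (imp b a)) ∈ Sig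
  Sig_S : (⨅ a : A, ⨅ b : A, ⨅ c : A,
      imp (imp a (imp b c)) (imp (imp a b) (imp a c))) ∈ Sig

namespace ImplicativeAlgebra

variable {A : Type u} [CompleteLattice A]

/-- `a × b := ⨅ x, ((a → (b → x)) → x)`. -/
def times (IA : ImplicativeAlgebra A) (a b : A) : A :=
  ⨅ x : A, IA.imp (IA.imp a (IA.imp b x)) x

/-- `a + b := ⨅ x, ((a → x) → ((b → x) → x))`. -/
def plus (IA : ImplicativeAlgebra A) (a b : A) : A :=
  ⨅ x : A, IA.imp (IA.imp a x) (IA.imp (IA.imp b x) x)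

/-- `∃⃗_{i} f i := ⨅ x, ((⨅ i, (f i → x)) → x)`.  (`∀⃗` is just `⨅`.) -/
def aex (IA : ImplicativeAlgebra A) {ι : Sort*} (f : ι → A) : A :=
  ⨅ x : A, IA.imp (⨅ i, IA.imp (f i) x) x

/-- `φ ⊢_{Σ[I]} ψ` iff `⨅ i, (φ i → ψ i) ∈ Σ`. -/
def SigLe (IA : ImplicativeAlgebra A) {ι : Sort*} (f g : ι → A) : Prop :=
  (⨅ i, IA.imp (f i) (g i)) ∈ IA.Sig

/-- `φ ≡_{Σ[I]} ψ` iff `φ ⊢_{Σ[I]} ψ` and `ψ ⊢_{Σ[I]} φ`. -/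
def SigEquiv (IA : ImplicativeAlgebra A) {ι : Sort*} (f g : ι → A) : Prop :=
  IA.SigLe f g ∧ IA.SigLe g f

end ImplicativeAlgebra

/-- Pre-elements of the cumulative hierarchy of partial functions valued in `A`:
an element is an `A`-labelled family of previously constructed elements, i.e. a partial
function (presented by a family indexed by its domain) from earlier elements to `A`. -/
inductive PreW (A : Type u) : Type (u + 1)
  | mk (ι : Type u) (fam : ι → PreW A) (val : ι → A)

namespace PreW

variable {A : Type u}

/-- The (index type of the) domain of a partial function. -/
def dom : PreW A → Type u
  | ⟨ι, _, _⟩ => ι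

/-- The family of elements of the domain. -/
def fam : (w : PreW A) → w.dom → PreW A
  | ⟨_, f, _⟩ => f

/-- The values in `A` of the partial function. -/
def val : (w : PreW A) → w.dom → A
  | ⟨_, _, v⟩ => v

/-- `w` is hereditarily of size `< κ`:  this carves out exactly the elements of the stage
`W_κ` of the hierarchy (for `κ` inaccessible). -/
def HSmall (κ : Cardinal.{u}) : PreW A → Prop
  | ⟨ι, f, _⟩ => Cardinal.mk ι < κ ∧ ∀ i, HSmall κ (f i)

theorem HSmall.fam {κ : Cardinal.{u}} :
    ∀ {w : PreW A}, w.HSmall κ → ∀ i : w.dom, (w.fam i).HSmall κ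
  | ⟨_, _, _⟩, h, i => h.2 i

/-- The rank of an element of the hierarchy. -/
noncomputable def rank : PreW A → Ordinal.{u}
  | ⟨_, f, _⟩ => ⨆ i, Order.succ (rank (f i))

theorem rank_lt_mk {ι : Type u} (f : ι → PreW A) (v : ι → A) (i : ι) :
    (f i).rank < (PreW.mk ι f v).rank := by
  have h : Order.succ (f i).rank ≤ ⨆ j, Order.succ (f j).rank := Ordinal.le_iSup _ i
  have : (f i).rank < ⨆ j, Order.succ (f j).rank :=
    lt_of_lt_of_le (Order.lt_succ _) h
  simpa [rank] using this

end PreW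

namespace ImplicativeAlgebra

variable {A : Type u} [CompleteLattice A]

/-- `α =_W β`, defined by recursion on rank:
`α =_W β := (α ⊆_W β) × (β ⊆_W α)` where
`α ⊆_W β := ∀⃗_{t ∈ dom α} (α t → (fam α t ∈_W β))` and
`γ ∈_W β := ∃⃗_{s ∈ dom β} (β s × (fam β s =_W γ))`. -/
noncomputable def eqW (IA : ImplicativeAlgebra A) : PreW A → PreW A → A
  | ⟨ι₁, f₁, v₁⟩, ⟨ι₂, f₂, v₂⟩ =>
    IA.times
      (⨅ t : ι₁, IA.imp (v₁ t)
        (IA.aex fun s : ι₂ => IA.times (v₂ s) (IA.eqW (f₂ s) (f₁ t))))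
      (⨅ t : ι₂, IA.imp (v₂ t)
        (IA.aex fun s : ι₁ => IA.times (v₁ s) (IA.eqW (f₁ s) (f₂ t))))
termination_by α β => max α.rank β.rank
decreasing_by
  · exact max_lt (lt_of_lt_of_le (PreW.rank_lt_mk f₂ v₂ s) (le_max_right _ _))
      (lt_of_lt_of_le (PreW.rank_lt_mk f₁ v₁ t) (le_max_left _ _))
  · exact max_lt (lt_of_lt_of_le (PreW.rank_lt_mk f₁ v₁ s) (le_max_left _ _))
      (lt_of_lt_of_le (PreW.rank_lt_mk f₂ v₂ t) (le_max_right _ _))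

/-- `α ∈_W β := ∃⃗_{s ∈ dom β} (β s × (fam β s =_W α))`. -/
noncomputable def memW (IA : ImplicativeAlgebra A) (α β : PreW A) : A :=
  IA.aex fun s : β.dom => IA.times (β.val s) (IA.eqW (β.fam s) α)

/-- `α ⊆_W β := ∀⃗_{t ∈ dom α} (α t → (fam α t ∈_W β))`. -/
noncomputable def subW (IA : ImplicativeAlgebra A) (α β : PreW A) : A :=
  ⨅ t : α.dom, IA.imp (α.val t) (IA.memW (α.fam t) β)

end ImplicativeAlgebra

/-- The stage `W = W_κ` of the hierarchy: all hereditarily `< κ`-sized elements. -/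
def WSet (A : Type u) (κ : Cardinal.{u}) : Type (u + 1) :=
  {w : PreW A // w.HSmall κ}

/-- An element of the domain of `w ∈ W`, as an element of `W`. -/
def WSet.fam {A : Type u} {κ : Cardinal.{u}} (w : WSet A κ) (i : w.1.dom) : WSet A κ :=
  ⟨w.1.fam i, w.2.fam i⟩

/-- Formulas (in context of length `n`) of the first-order language of set theory, with
(de Bruijn-style) variables `Fin n`, binary predicates `∈` and `=`, connectives `⊥`, `∧`, `∨`,
`→` and quantifiers `∃`, `∀` (binding the last variable of the enlarged context). -/
inductive SetFormula : ℕ → Type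
  | bot {n : ℕ} : SetFormula n
  | mem {n : ℕ} (i j : Fin n) : SetFormula n
  | eq {n : ℕ} (i j : Fin n) : SetFormula n
  | and {n : ℕ} (φ ψ : SetFormula n) : SetFormula n
  | or {n : ℕ} (φ ψ : SetFormula n) : SetFormula n
  | imp {n : ℕ} (φ ψ : SetFormula n) : SetFormula n
  | ex {n : ℕ} (φ : SetFormula (n + 1)) : SetFormula n
  | all {n : ℕ} (φ : SetFormula (n + 1)) : SetFormula n

namespace SetFormula

/-- Renaming of variables (since the only terms of the language of set theory are variables,
substitution is a special case). -/
def rename : {n m : ℕ} → (Fin n → Fin m) → SetFormula n → SetFormula m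
  | _, _, _, .bot => .bot
  | _, _, f, .mem i j => .mem (f i) (f j)
  | _, _, f, .eq i j => .eq (f i) (f j)
  | _, _, f, .and φ ψ => .and (φ.rename f) (ψ.rename f)
  | _, _, f, .or φ ψ => .or (φ.rename f) (ψ.rename f)
  | _, _, f, .imp φ ψ => .imp (φ.rename f) (ψ.rename f)
  | _, _, f, .ex φ => .ex (φ.rename (Fin.snoc (Fin.castSucc ∘ f) (Fin.last _)))
  | _, _, f, .all φ => .all (φ.rename (Fin.snoc (Fin.castSucc ∘ f) (Fin.last _)))

/-- Universal closure `∀x₁ … ∀xₙ φ` of a formula in context of length `n`. -/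
def allClose : {n : ℕ} → SetFormula n → SetFormula 0
  | 0, φ => φ
  | _ + 1, φ => allClose (.all φ)

end SetFormula

namespace ImplicativeAlgebra

variable {A : Type u} [CompleteLattice A]

/-- The interpretation `‖φ[x₁,…,xₙ]‖ : Wⁿ → A` of a formula in context, by recursion on the
structure of `φ`:  atomic formulas are interpreted by `∈_W` and `=_W`, `∧` by `×`, `∨` by `+`,
`→` by `→`, `∃` by `∃⃗` over `W` and `∀` by `∀⃗` (i.e. `⨅`) over `W`. -/
noncomputable def interp (IA : ImplicativeAlgebra A) (κ : Cardinal.{u}) :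
    {n : ℕ} → SetFormula n → (Fin n → WSet A κ) → A
  | _, .bot, _ => ⊥
  | _, .mem i j, v => IA.memW (v i).1 (v j).1
  | _, .eq i j, v => IA.eqW (v i).1 (v j).1
  | _, .and φ ψ, v => IA.times (IA.interp κ φ v) (IA.interp κ ψ v)
  | _, .or φ ψ, v => IA.plus (IA.interp κ φ v) (IA.interp κ ψ v)
  | _, .imp φ ψ, v => IA.imp (IA.interp κ φ v) (IA.interp κ ψ v)
  | _, .ex φ, v => IA.aex fun β : WSet A κ => IA.interp κ φ (Fin.snoc v β)
  | _, .all φ, v => ⨅ β : WSet A κ, IA.interp κ φ (Fin.snoc v β)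

end ImplicativeAlgebra

/-!
Unfolding the definitions, `α =_W α` is `(α ⊆_W α) × (α ⊆_W α)`, and `α(u) → (u ∈_W α)` is
realized by any `j` that sends a realizer `b` of `α(u)` and a continuation `k` to
`k (b, (r, r))` with `r` a realizer of `u ⊆_W u`. A fixpoint combinator produces a `j` that
uses itself as `r`; that this `j` realizes `α ⊆_W α` for every `α` then follows by induction
on `α`. The combinators involved are built from `K` and `S` by bracket abstraction, hence lie in
`Σ`.
-/

namespace ImplicativeAlgebra

variable {A : Type u} [CompleteLattice A] (IA : ImplicativeAlgebra A)

noncomputable def app (a b : A) : A :=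
  sInf {c | a ≤ IA.imp b c}

noncomputable def K : A :=
  ⨅ a : A, ⨅ b : A, IA.imp a (IA.imp b a)

noncomputable def S : A :=
  ⨅ a : A, ⨅ b : A, ⨅ c : A,
    IA.imp (IA.imp a (IA.imp b c)) (IA.imp (IA.imp a b) (IA.imp a c))

variable {IA}

theorem le_imp_app (a b : A) : a ≤ IA.imp b (IA.app a b) := by
  rw [app, IA.imp_sInf]
  exact le_iInf₂ fun _ hc => hc

theorem app_le_iff {a b c : A} : IA.app a b ≤ c ↔ a ≤ IA.imp b c :=
  ⟨fun h => (le_imp_app a b).trans (IA.imp_monotone h), fun h => sInf_le h⟩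

theorem app_mono {a a' b b' : A} (ha : a ≤ a') (hb : b ≤ b') :
    IA.app a b ≤ IA.app a' b' :=
  app_le_iff.2 (ha.trans ((le_imp_app a' b').trans (IA.imp_antitone hb)))

theorem app_mem_Sig {a b : A} (ha : a ∈ IA.Sig) (hb : b ∈ IA.Sig) : IA.app a b ∈ IA.Sig :=
  IA.Sig_mp (IA.Sig_upward ha (le_imp_app a b)) hb

theorem K_le (a b : A) : IA.K ≤ IA.imp a (IA.imp b a) :=
  (iInf_le _ a).trans (iInf_le _ b)

theorem S_le (a b c : A) :
    IA.S ≤ IA.imp (IA.imp a (IA.imp b c)) (IA.imp (IA.imp a b) (IA.imp a c)) :=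
  ((iInf_le _ a).trans (iInf_le _ b)).trans (iInf_le _ c)

theorem app_app_S_K_K_le (a : A) : IA.app (IA.app IA.S IA.K) IA.K ≤ IA.imp a a := by
  have hSK : IA.app IA.S IA.K ≤ IA.imp (IA.imp a (IA.imp a a)) (IA.imp a a) :=
    app_le_iff.2 ((S_le a (IA.imp a a) a).trans (IA.imp_antitone (K_le a (IA.imp a a))))
  exact app_le_iff.2 (hSK.trans (IA.imp_antitone (K_le a a)))

theorem times_mono {a a' b b' : A} (ha : a ≤ a') (hb : b ≤ b') :
    IA.times a b ≤ IA.times a' b' :=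
  iInf_mono fun _ =>
    IA.imp_antitone ((IA.imp_antitone ha).trans (IA.imp_monotone (IA.imp_antitone hb)))

theorem le_aex_of_app_le {ι : Sort*} {g : ι → A} {e r : A} (i : ι) (hr : r ≤ g i)
    (he : ∀ k, IA.app e k ≤ IA.app k r) : e ≤ IA.aex g :=
  le_iInf fun _ => app_le_iff.1 <|
    (he _).trans (app_le_iff.2 ((iInf_le _ i).trans (IA.imp_antitone hr)))

end ImplicativeAlgebra

inductive CombTerm (A : Type u) : ℕ → Type u
  | var {n : ℕ} : Fin n → CombTerm A n
  | k {n : ℕ} : CombTerm A n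
  | s {n : ℕ} : CombTerm A n
  | const {n : ℕ} (a : A) : CombTerm A n
  | app {n : ℕ} : CombTerm A n → CombTerm A n → CombTerm A n

namespace CombTerm

variable {A : Type u}

/-- Bracket abstraction of the last variable. -/
def abs : {n : ℕ} → CombTerm A (n + 1) → CombTerm A n
  | _, .var i => if h : i = Fin.last _ then .app (.app .s .k) .k else .app .k (.var (i.castPred h))
  | _, .k => .app .k .k
  | _, .s => .app .k .s
  | _, .const a => .app .k (.const a)
  | _, .app t u => .app (.app .s (abs t)) (abs u)

def ConstsIn (C : Set A) : {n : ℕ} → CombTerm A n → Prop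
  | _, .const a => a ∈ C
  | _, .app t u => ConstsIn C t ∧ ConstsIn C u
  | _, .var _ => True
  | _, .k => True
  | _, .s => True

theorem ConstsIn.abs {C : Set A} {n : ℕ} {t : CombTerm A (n + 1)} (h : t.ConstsIn C) :
    t.abs.ConstsIn C := by
  induction t with
  | var i => by_cases hi : i = Fin.last n <;> simp [CombTerm.abs, hi, ConstsIn]
  | app t u iht ihu =>
    simp only [CombTerm.abs, ConstsIn] at h ⊢
    exact ⟨⟨trivial, iht h.1⟩, ihu h.2⟩
  | const a => simpa only [CombTerm.abs, ConstsIn, true_and] using h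
  | _ => simp only [CombTerm.abs, ConstsIn, and_self]

end CombTerm

namespace ImplicativeAlgebra

open CombTerm

variable {A : Type u} [CompleteLattice A] (IA : ImplicativeAlgebra A)

noncomputable def eval : {n : ℕ} → CombTerm A n → (Fin n → A) → A
  | _, .var i, env => env i
  | _, .k, _ => IA.K
  | _, .s, _ => IA.S
  | _, .const a, _ => a
  | _, .app t u, env => IA.app (eval t env) (eval u env)

variable {IA}

theorem eval_abs_le {n : ℕ} (t : CombTerm A (n + 1)) (env : Fin n → A) (a : A) :
    IA.eval t.abs env ≤ IA.imp a (IA.eval t (Fin.snoc env a)) := by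
  induction t with
  | var i =>
    by_cases h : i = Fin.last n
    · subst h
      simpa only [CombTerm.abs, dif_pos, eval, Fin.snoc_last] using app_app_S_K_K_le a
    · obtain ⟨j, rfl⟩ := Fin.exists_castSucc_eq.2 h
      simpa [CombTerm.abs, eval] using app_le_iff.2 (K_le (env j) a)
  | app t u iht ihu =>
    simp only [CombTerm.abs, eval]
    set T := IA.eval t (Fin.snoc env a)
    set U := IA.eval u (Fin.snoc env a)
    have ht : IA.eval t.abs env ≤ IA.imp a (IA.imp U (IA.app T U)) :=
      iht.trans (IA.imp_monotone (le_imp_app T U))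
    have hst : IA.app IA.S (IA.eval t.abs env) ≤ IA.imp (IA.imp a U) (IA.imp a (IA.app T U)) :=
      app_le_iff.2 ((S_le a U (IA.app T U)).trans (IA.imp_antitone ht))
    exact app_le_iff.2 (hst.trans (IA.imp_antitone ihu))
  | _ => simp only [CombTerm.abs, eval]; exact app_le_iff.2 (K_le _ a)

theorem app_eval_abs_le {n : ℕ} (t : CombTerm A (n + 1)) (env : Fin n → A) (a : A) :
    IA.app (IA.eval t.abs env) a ≤ IA.eval t (Fin.snoc env a) :=
  app_le_iff.2 (eval_abs_le t env a)

theorem app_app_eval_abs_abs_le {n : ℕ} (t : CombTerm A (n + 2)) (env : Fin n → A) (a b : A) :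
    IA.app (IA.app (IA.eval t.abs.abs env) a) b ≤ IA.eval t (Fin.snoc (Fin.snoc env a) b) :=
  (app_mono (app_eval_abs_le _ env a) le_rfl).trans (app_eval_abs_le t _ b)

theorem app_app_app_eval_abs_abs_abs_le {n : ℕ} (t : CombTerm A (n + 3)) (env : Fin n → A)
    (a b c : A) : IA.app (IA.app (IA.app (IA.eval t.abs.abs.abs env) a) b) c ≤
      IA.eval t (Fin.snoc (Fin.snoc (Fin.snoc env a) b) c) :=
  (app_mono (app_app_eval_abs_abs_le _ env a b) le_rfl).trans (app_eval_abs_le t _ c)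

theorem eval_mem_Sig {n : ℕ} {t : CombTerm A n} (ht : t.ConstsIn IA.Sig) {env : Fin n → A}
    (henv : ∀ i, env i ∈ IA.Sig) : IA.eval t env ∈ IA.Sig := by
  induction t with
  | var i => simpa only [eval] using henv i
  | k => simpa only [eval, K] using IA.Sig_K
  | s => simpa only [eval, S] using IA.Sig_S
  | const a => simpa only [eval, ConstsIn] using ht
  | app t u iht ihu =>
    simp only [ConstsIn] at ht
    simpa only [eval] using app_mem_Sig (iht ht.1) (ihu ht.2)

theorem exists_pairing : ∃ p ∈ IA.Sig, ∀ a b, IA.app (IA.app p a) b ≤ IA.times a b := by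
  -- `λ a b k. k a b`
  let body : CombTerm A 3 := .app (.app (.var 2) (.var 0)) (.var 1)
  refine ⟨IA.eval body.abs.abs.abs Fin.elim0,
    eval_mem_Sig (.abs (.abs (.abs (by simp [body, ConstsIn])))) (fun i => i.elim0),
    fun a b => le_iInf fun x => ?_⟩
  have hk : IA.app (IA.app (IA.imp a (IA.imp b x)) a) b ≤ x := app_le_iff.2 (app_le_iff.2 le_rfl)
  refine ((app_app_eval_abs_abs_le _ _ a b).trans (eval_abs_le _ _ (IA.imp a (IA.imp b x)))).trans
    (IA.imp_monotone ?_)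
  simpa [body, eval, Fin.snoc] using hk

theorem exists_fixpoint {f : A} (hf : f ∈ IA.Sig) : ∃ j ∈ IA.Sig, j ≤ IA.app f j := by
  -- Turing's fixpoint combinator `Θ := θ θ` with `θ := λ x g. g (x x g)`
  let body : CombTerm A 2 := .app (.var 1) (.app (.app (.var 0) (.var 0)) (.var 1))
  set θ := IA.eval body.abs.abs Fin.elim0
  have hθ : θ ∈ IA.Sig :=
    eval_mem_Sig (.abs (.abs (by simp [body, ConstsIn]))) (fun i => i.elim0)
  refine ⟨IA.app (IA.app θ θ) f, app_mem_Sig (app_mem_Sig hθ hθ) hf, ?_⟩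
  simpa [body, eval, Fin.snoc] using app_app_eval_abs_abs_le body Fin.elim0 θ f

theorem exists_self_pairing {p : A} (hp : p ∈ IA.Sig) : ∃ j ∈ IA.Sig, ∀ b k,
    IA.app (IA.app j b) k ≤ IA.app k (IA.app (IA.app p b) (IA.app (IA.app p j) j)) := by
  -- a fixpoint of `λ j b k. k (p b (p j j))`
  let body : CombTerm A 3 :=
    .app (.var 2) (.app (.app (.const p) (.var 1)) (.app (.app (.const p) (.var 0)) (.var 0)))
  have hF : IA.eval body.abs.abs.abs Fin.elim0 ∈ IA.Sig :=
    eval_mem_Sig (.abs (.abs (.abs (by simp [body, ConstsIn, hp])))) (fun i => i.elim0)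
  obtain ⟨j, hjSig, hj⟩ := exists_fixpoint hF
  refine ⟨j, hjSig, fun b k => (app_mono (app_mono hj le_rfl) le_rfl).trans ?_⟩
  simpa [body, eval, Fin.snoc] using app_app_app_eval_abs_abs_abs_le body Fin.elim0 j b k

theorem eqW_eq_times_subW (α β : PreW A) :
    IA.eqW α β = IA.times (IA.subW α β) (IA.subW β α) := by
  obtain ⟨_, _, _⟩ := α
  obtain ⟨_, _, _⟩ := β
  rw [eqW]
  rfl

theorem le_subW_self {p j : A} (hp : ∀ a b, IA.app (IA.app p a) b ≤ IA.times a b)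
    (hj : ∀ b k, IA.app (IA.app j b) k ≤ IA.app k (IA.app (IA.app p b) (IA.app (IA.app p j) j)))
    (γ : PreW A) : j ≤ IA.subW γ γ := by
  induction γ with
  | mk ι f v ih =>
    refine le_iInf fun t => app_le_iff.1 (le_aex_of_app_le t ?_ (hj (v t)))
    have hjj : IA.app (IA.app p j) j ≤ IA.eqW (f t) (f t) :=
      (hp j j).trans ((times_mono (ih t) (ih t)).trans (eqW_eq_times_subW _ _).ge)
    exact (app_mono le_rfl hjj).trans (hp _ _)

theorem exists_mem_Sig_le_subW_self : ∃ j ∈ IA.Sig, ∀ γ : PreW A, j ≤ IA.subW γ γ := by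
  obtain ⟨p, hpSig, hp⟩ := exists_pairing (IA := IA)
  obtain ⟨j, hjSig, hj⟩ := exists_self_pairing hpSig
  exact ⟨j, hjSig, le_subW_self hp hj⟩

end ImplicativeAlgebra

theorem stmt1_general {A : Type u} [CompleteLattice A] (IA : ImplicativeAlgebra A)
    (κ : Cardinal.{u}) :
    ∃ j ∈ IA.Sig, j ≤ ⨅ α : WSet A κ, ⨅ u : α.1.dom,
      IA.imp (α.1.val u) (IA.memW (α.1.fam u) α.1) := by
  obtain ⟨j, hjSig, hj⟩ := IA.exists_mem_Sig_le_subW_self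
  exact ⟨j, hjSig, le_iInf fun α => hj α.1⟩

theorem stmt1 {A : Type u} [CompleteLattice A] (IA : ImplicativeAlgebra A)
    (κ : Cardinal.{u}) (hκ : κ.IsInaccessible) (hA : Cardinal.mk A < κ) :
    ∃ j ∈ IA.Sig, j ≤ ⨅ α : WSet A κ, ⨅ u : α.1.dom,
      IA.imp (α.1.val u) (IA.memW (α.1.fam u) α.1) :=
  stmt1_general IA κ
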